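/- arXiv:2306.14799 — 4 statements merged into one kernel-verified Lean document; each statement's English description precedes it below -/
import Mathlib

section
/- Error-propagation lemma for BC with population-dependent dynamics: if the transition kernel is L_P-Lipschitz in the population (L_P > 0), and E_{s∼ρₙᴱ}[‖πₙᴬ(·|s) − πₙᴱ(·|s)‖₁] ≤ ε for all n, then the population flows satisfy ‖ρ_{n+1}ᴬ − ρ_{n+1}ᴱ‖₁ ≤ (1+L_P)‖ρₙᴬ − ρₙᴱ‖₁ + ε for all n, and consequently ‖ρₙᴬ − ρₙᴱ‖₁ ≤ ε·((1+L_P)ⁿ − 1)/L_P and Σ_{n=0}^{H−1} ‖ρₙᴬ − ρₙᴱ‖₁ ≤ (1+L_P)^H · ε / L_P². -/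
open Finset

/-- Population flow of policy `pol` in a mean-field game: the dynamics at time
`n` is driven by the population distribution itself. -/
noncomputable def popFlow {S A : Type*} [Fintype S] [Fintype A]
    (P : S → A → (S → ℝ) → S → ℝ) (pol : ℕ → S → A → ℝ) (ρ0 : S → ℝ) : ℕ → S → ℝ
  | 0 => ρ0
  | n + 1 => fun s' => ∑ s : S, ∑ a : A,
      popFlow P pol ρ0 n s * pol n s a * P s a (popFlow P pol ρ0 n) s'

/-- Flow of a single agent using policy `pol` while the dynamics is driven by a
given population distribution sequence `ρpop`. -/
noncomputable def agentFlow {S A : Type*} [Fintype S] [Fintype A]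
    (P : S → A → (S → ℝ) → S → ℝ) (ρpop : ℕ → S → ℝ)
    (pol : ℕ → S → A → ℝ) (ρ0 : S → ℝ) : ℕ → S → ℝ
  | 0 => ρ0
  | n + 1 => fun s' => ∑ s : S, ∑ a : A,
      agentFlow P ρpop pol ρ0 n s * pol n s a * P s a (ρpop n) s'

/-- Value of an agent using `pol` against the population sequence `ρpop`. -/
noncomputable def val {S A : Type*} [Fintype S] [Fintype A]
    (P : S → A → (S → ℝ) → S → ℝ) (r : S → A → (S → ℝ) → ℝ) (ρ0 : S → ℝ) (H : ℕ)
    (pol : ℕ → S → A → ℝ) (ρpop : ℕ → S → ℝ) : ℝ :=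
  ∑ n ∈ range H, ∑ s, ∑ a, agentFlow P ρpop pol ρ0 n s * pol n s a * r s a (ρpop n)

/-- Error-propagation for behavioral cloning with population-dependent
dynamics: one-step recursion, closed-form bound `ε((1+L_P)ⁿ − 1)/L_P`, and the
summed bound `(1+L_P)^H ε / L_P²`. -/
theorem bc_error_propagation_pop_dep {S A : Type*} [Fintype S] [Fintype A]
    (P : S → A → (S → ℝ) → S → ℝ) (πE πA : ℕ → S → A → ℝ) (ρ0 : S → ℝ)
    (H : ℕ) (LP ε : ℝ) (hLP : 0 < LP)
    (hP : ∀ s a (ρ : S → ℝ), (∀ s', 0 ≤ P s a ρ s') ∧ ∑ s', P s a ρ s' = 1)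
    (hPLip : ∀ s a (ρ ρ' : S → ℝ),
      ∑ s', |P s a ρ s' - P s a ρ' s'| ≤ LP * ∑ x, |ρ x - ρ' x|)
    (hπE : ∀ n s, (∀ a, 0 ≤ πE n s a) ∧ ∑ a, πE n s a = 1)
    (hπA : ∀ n s, (∀ a, 0 ≤ πA n s a) ∧ ∑ a, πA n s a = 1)
    (hρ0 : (∀ s, 0 ≤ ρ0 s) ∧ ∑ s, ρ0 s = 1)
    (hBC : ∀ n, ∑ s, popFlow P πE ρ0 n s * (∑ a, |πA n s a - πE n s a|) ≤ ε) :
    (∀ n, ∑ s, |popFlow P πA ρ0 (n + 1) s - popFlow P πE ρ0 (n + 1) s| ≤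
        (1 + LP) * (∑ s, |popFlow P πA ρ0 n s - popFlow P πE ρ0 n s|) + ε) ∧
    (∀ n, ∑ s, |popFlow P πA ρ0 n s - popFlow P πE ρ0 n s| ≤
        ε * ((1 + LP) ^ n - 1) / LP) ∧
    ∑ n ∈ range H, ∑ s, |popFlow P πA ρ0 n s - popFlow P πE ρ0 n s| ≤
        (1 + LP) ^ H * ε / LP ^ 2 := by

  set ρA := popFlow P πA ρ0 with hρA
  set ρE := popFlow P πE ρ0 with hρE
  -- nonnegativity and mass-1 of the expert flow
  have hEnn : ∀ n, (∀ s, 0 ≤ ρE n s) ∧ ∑ s, ρE n s = 1 := by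
    intro n
    induction n with
    | zero => exact hρ0
    | succ n ih =>
      constructor
      · intro s'
        show 0 ≤ ∑ s : S, ∑ a : A, ρE n s * πE n s a * P s a (ρE n) s'
        refine Finset.sum_nonneg fun s _ => Finset.sum_nonneg fun a _ => ?_
        exact mul_nonneg (mul_nonneg (ih.1 s) ((hπE n s).1 a)) ((hP s a (ρE n)).1 s')
      · show ∑ s', ∑ s : S, ∑ a : A, ρE n s * πE n s a * P s a (ρE n) s' = 1
        rw [Finset.sum_comm]
        have : ∀ s ∈ Finset.univ (α := S),
            (∑ s' : S, ∑ a : A, ρE n s * πE n s a * P s a (ρE n) s') = ρE n s := by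
          intro s _
          rw [Finset.sum_comm]
          have : ∀ a ∈ Finset.univ (α := A),
              (∑ s' : S, ρE n s * πE n s a * P s a (ρE n) s') = ρE n s * πE n s a := by
            intro a _
            rw [← Finset.mul_sum, (hP s a (ρE n)).2, mul_one]
          rw [Finset.sum_congr rfl this, ← Finset.mul_sum, (hπE n s).2, mul_one]
        rw [Finset.sum_congr rfl this, ih.2]
  -- ε is nonnegative
  have hε : 0 ≤ ε := by
    refine le_trans ?_ (hBC 0)
    refine Finset.sum_nonneg fun s _ => mul_nonneg ((hEnn 0).1 s) ?_
    exact Finset.sum_nonneg fun a _ => abs_nonneg _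
  -- one-step recursion
  have hstep : ∀ n, ∑ s, |ρA (n + 1) s - ρE (n + 1) s| ≤
      (1 + LP) * (∑ s, |ρA n s - ρE n s|) + ε := by
    intro n
    set D := ∑ s, |ρA n s - ρE n s| with hD
    have key : ∑ s', |ρA (n+1) s' - ρE (n+1) s'| ≤
        ∑ s', ∑ s, ∑ a, (|ρA n s * πA n s a - ρE n s * πE n s a| * P s a (ρA n) s'
          + ρE n s * πE n s a * |P s a (ρA n) s' - P s a (ρE n) s'|) := by
      refine Finset.sum_le_sum fun s' _ => ?_
      have h1 : ρA (n+1) s' - ρE (n+1) s' =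
          ∑ s, ∑ a, (ρA n s * πA n s a * P s a (ρA n) s'
            - ρE n s * πE n s a * P s a (ρE n) s') := by
        show (∑ s : S, ∑ a : A, ρA n s * πA n s a * P s a (ρA n) s')
            - (∑ s : S, ∑ a : A, ρE n s * πE n s a * P s a (ρE n) s') = _
        rw [← Finset.sum_sub_distrib]
        exact Finset.sum_congr rfl fun s _ => (Finset.sum_sub_distrib _ _).symm
      rw [h1]
      refine le_trans (Finset.abs_sum_le_sum_abs _ _) (Finset.sum_le_sum fun s _ => ?_)
      refine le_trans (Finset.abs_sum_le_sum_abs _ _) (Finset.sum_le_sum fun a _ => ?_)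
      have h2 : ρA n s * πA n s a * P s a (ρA n) s' - ρE n s * πE n s a * P s a (ρE n) s'
          = (ρA n s * πA n s a - ρE n s * πE n s a) * P s a (ρA n) s'
            + ρE n s * πE n s a * (P s a (ρA n) s' - P s a (ρE n) s') := by ring
      rw [h2]
      refine le_trans (abs_add_le _ _) ?_
      rw [abs_mul, abs_mul]
      gcongr
      · exact le_of_eq (abs_of_nonneg ((hP s a (ρA n)).1 s'))
      · exact le_of_eq (abs_of_nonneg (mul_nonneg ((hEnn n).1 s) ((hπE n s).1 a)))
    rw [Finset.sum_comm] at key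
    have key2 : ∀ s ∈ Finset.univ (α := S),
        (∑ s' : S, ∑ a : A, (|ρA n s * πA n s a - ρE n s * πE n s a| * P s a (ρA n) s'
          + ρE n s * πE n s a * |P s a (ρA n) s' - P s a (ρE n) s'|)) ≤
        ∑ a, (|ρA n s * πA n s a - ρE n s * πE n s a| + ρE n s * πE n s a * (LP * D)) := by
      intro s _
      rw [Finset.sum_comm]
      refine Finset.sum_le_sum fun a _ => ?_
      rw [Finset.sum_add_distrib, ← Finset.mul_sum, ← Finset.mul_sum,
        (hP s a (ρA n)).2, mul_one]
      gcongr
      · exact mul_nonneg ((hEnn n).1 s) ((hπE n s).1 a)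
      · exact hPLip s a (ρA n) (ρE n)
    have key3 := le_trans key (Finset.sum_le_sum key2)
    have hsplit : ∑ s, ∑ a, (|ρA n s * πA n s a - ρE n s * πE n s a|
          + ρE n s * πE n s a * (LP * D)) ≤ (D + ε) + LP * D := by
      have hA : ∀ s ∈ Finset.univ (α := S),
          (∑ a, |ρA n s * πA n s a - ρE n s * πE n s a|) ≤
          |ρA n s - ρE n s| + ρE n s * (∑ a, |πA n s a - πE n s a|) := by
        intro s _
        have : ∀ a ∈ Finset.univ (α := A),
            |ρA n s * πA n s a - ρE n s * πE n s a| ≤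
            |ρA n s - ρE n s| * πA n s a + ρE n s * |πA n s a - πE n s a| := by
          intro a _
          have h3 : ρA n s * πA n s a - ρE n s * πE n s a
              = (ρA n s - ρE n s) * πA n s a + ρE n s * (πA n s a - πE n s a) := by ring
          rw [h3]
          refine le_trans (abs_add_le _ _) ?_
          rw [abs_mul, abs_mul]
          gcongr
          · exact le_of_eq (abs_of_nonneg ((hπA n s).1 a))
          · exact le_of_eq (abs_of_nonneg ((hEnn n).1 s))
        refine le_trans (Finset.sum_le_sum this) ?_
        rw [Finset.sum_add_distrib, ← Finset.mul_sum, ← Finset.mul_sum, (hπA n s).2, mul_one]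
      have hsum1 : ∑ s, ∑ a, |ρA n s * πA n s a - ρE n s * πE n s a| ≤ D + ε := by
        refine le_trans (Finset.sum_le_sum hA) ?_
        rw [Finset.sum_add_distrib]
        exact add_le_add le_rfl (hBC n)
      have hsum2 : ∑ s, ∑ a, ρE n s * πE n s a * (LP * D) = LP * D := by
        have : ∀ s ∈ Finset.univ (α := S),
            (∑ a, ρE n s * πE n s a * (LP * D)) = ρE n s * (LP * D) := by
          intro s _
          rw [← Finset.sum_mul, ← Finset.mul_sum, (hπE n s).2, mul_one]
        rw [Finset.sum_congr rfl this, ← Finset.sum_mul, (hEnn n).2, one_mul]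
      calc ∑ s, ∑ a, (|ρA n s * πA n s a - ρE n s * πE n s a|
              + ρE n s * πE n s a * (LP * D))
          = (∑ s, ∑ a, |ρA n s * πA n s a - ρE n s * πE n s a|)
            + ∑ s, ∑ a, ρE n s * πE n s a * (LP * D) := by
            rw [← Finset.sum_add_distrib]
            exact Finset.sum_congr rfl fun s _ => Finset.sum_add_distrib
        _ ≤ (D + ε) + LP * D := by rw [hsum2]; exact add_le_add hsum1 le_rfl
    have := le_trans key3 hsplit
    linarith
  -- closed-form bound
  have hclosed : ∀ n, ∑ s, |ρA n s - ρE n s| ≤ ε * ((1 + LP) ^ n - 1) / LP := by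
    intro n
    induction n with
    | zero => simp [show ρA 0 = ρ0 from rfl, show ρE 0 = ρ0 from rfl]
    | succ n ih =>
      refine le_trans (hstep n) ?_
      have h1 : (1 + LP) * (∑ s, |ρA n s - ρE n s|) + ε ≤
          (1 + LP) * (ε * ((1 + LP) ^ n - 1) / LP) + ε := by
        have h0 : (0:ℝ) ≤ 1 + LP := by linarith
        nlinarith [mul_le_mul_of_nonneg_left ih h0]
      refine le_trans h1 (le_of_eq ?_)
      field_simp
      ring
  refine ⟨hstep, hclosed, ?_⟩
  have hgeom : ∑ n ∈ range H, ∑ s, |ρA n s - ρE n s| ≤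
      ∑ n ∈ range H, ε / LP * (1 + LP) ^ n := by
    refine Finset.sum_le_sum fun n _ => ?_
    refine le_trans (hclosed n) ?_
    rw [div_mul_eq_mul_div]
    gcongr
    nlinarith [mul_nonneg hε (pow_nonneg (by linarith : (0:ℝ) ≤ 1 + LP) n)]
  refine le_trans hgeom ?_
  rw [← Finset.mul_sum, geom_sum_eq (by linarith : (1:ℝ) + LP ≠ 1)]
  have h2 : (1 + LP - 1) = LP := by ring
  rw [h2]
  rw [div_mul_div_comm]
  rw [div_le_div_iff₀ (by positivity) (by positivity)]
  have : (1 + LP) ^ H - 1 ≤ (1 + LP) ^ H := by linarith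
  nlinarith [pow_nonneg (by linarith : (0:ℝ) ≤ 1 + LP) H, sq_nonneg LP]
end

section
/- Same-policy, different-population error propagation: for any policy π and Lipschitz constant L_P > 0 of the kernel, the single-agent flows under the two populations satisfy ‖ρ_{n+1}^{(πᴬ)π} − ρ_{n+1}^{(πᴱ)π}‖₁ ≤ L_P‖ρₙᴬ − ρₙᴱ‖₁ + ‖ρₙ^{(πᴬ)π} − ρₙ^{(πᴱ)π}‖₁. Consequently, if additionally ‖ρₙᴬ − ρₙᴱ‖₁ ≤ ε(1+L_P)ⁿ/L_P for all n, then Σ_{n=0}^{H−1} ‖ρₙ^{(πᴬ)π} − ρₙ^{(πᴱ)π}‖₁ ≤ ε(1+L_P)^H / L_P². -/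
open Finset

lemma agentFlow_mass {S A : Type*} [Fintype S] [Fintype A]
    (P : S → A → (S → ℝ) → S → ℝ) (ρpop : ℕ → S → ℝ) (pol : ℕ → S → A → ℝ) (ρ0 : S → ℝ)
    (hP : ∀ s a (ρ : S → ℝ), (∀ s', 0 ≤ P s a ρ s') ∧ ∑ s', P s a ρ s' = 1)
    (hpol : ∀ n s, (∀ a, 0 ≤ pol n s a) ∧ ∑ a, pol n s a = 1)
    (hρ0 : (∀ s, 0 ≤ ρ0 s) ∧ ∑ s, ρ0 s = 1) :
    ∀ n, (∀ s, 0 ≤ agentFlow P ρpop pol ρ0 n s) ∧ ∑ s, agentFlow P ρpop pol ρ0 n s = 1 := by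
  intro n
  induction n with
  | zero => exact hρ0
  | succ n ih =>
    constructor
    · intro s'
      simp only [agentFlow]
      apply Finset.sum_nonneg; intro s _
      apply Finset.sum_nonneg; intro a _
      exact mul_nonneg (mul_nonneg (ih.1 s) ((hpol n s).1 a)) ((hP s a _).1 s')
    · simp only [agentFlow]
      rw [Finset.sum_comm]
      have h1 : ∀ s : S, ∑ s' : S, ∑ a : A,
          agentFlow P ρpop pol ρ0 n s * pol n s a * P s a (ρpop n) s'
          = agentFlow P ρpop pol ρ0 n s := by
        intro s
        rw [Finset.sum_comm]
        have : ∀ a : A, ∑ s' : S, agentFlow P ρpop pol ρ0 n s * pol n s a * P s a (ρpop n) s'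
            = agentFlow P ρpop pol ρ0 n s * pol n s a := by
          intro a
          rw [← Finset.mul_sum, (hP s a _).2, mul_one]
        rw [Finset.sum_congr rfl (fun a _ => this a), ← Finset.mul_sum, (hpol n s).2, mul_one]
      rw [Finset.sum_congr rfl (fun s _ => h1 s), ih.2]

lemma step_bound {S A : Type*} [Fintype S] [Fintype A]
    (P : S → A → (S → ℝ) → S → ℝ) (pol : S → A → ℝ) (μ ν ρ ρ' : S → ℝ) (LP : ℝ)
    (hP : ∀ s a (ρ : S → ℝ), (∀ s', 0 ≤ P s a ρ s') ∧ ∑ s', P s a ρ s' = 1)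
    (hPLip : ∀ s a (ρ ρ' : S → ℝ),
      ∑ s', |P s a ρ s' - P s a ρ' s'| ≤ LP * ∑ x, |ρ x - ρ' x|)
    (hpol : ∀ s, (∀ a, 0 ≤ pol s a) ∧ ∑ a, pol s a = 1)
    (hμ : ∀ s, 0 ≤ μ s) (hμ1 : ∑ s, μ s = 1) :
    ∑ s', |(∑ s, ∑ a, μ s * pol s a * P s a ρ s') - ∑ s, ∑ a, ν s * pol s a * P s a ρ' s'| ≤
      LP * ∑ x, |ρ x - ρ' x| + ∑ s, |μ s - ν s| := by
  have key : ∀ s' : S, |(∑ s, ∑ a, μ s * pol s a * P s a ρ s') - ∑ s, ∑ a, ν s * pol s a * P s a ρ' s'| ≤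
      (∑ s, ∑ a, μ s * pol s a * |P s a ρ s' - P s a ρ' s'|) +
      ∑ s, ∑ a, |μ s - ν s| * pol s a * P s a ρ' s' := by
    intro s'
    have : (∑ s, ∑ a, μ s * pol s a * P s a ρ s') - ∑ s, ∑ a, ν s * pol s a * P s a ρ' s'
        = (∑ s, ∑ a, μ s * pol s a * (P s a ρ s' - P s a ρ' s')) +
          ∑ s, ∑ a, (μ s - ν s) * pol s a * P s a ρ' s' := by
      rw [← Finset.sum_add_distrib, ← Finset.sum_sub_distrib]
      congr 1; ext s
      rw [← Finset.sum_add_distrib, ← Finset.sum_sub_distrib]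
      congr 1; ext a; ring
    rw [this]
    refine (abs_add_le _ _).trans (add_le_add ?_ ?_)
    · refine (Finset.abs_sum_le_sum_abs _ _).trans (Finset.sum_le_sum fun s _ => ?_)
      refine (Finset.abs_sum_le_sum_abs _ _).trans (Finset.sum_le_sum fun a _ => ?_)
      rw [abs_mul, abs_mul, abs_of_nonneg (hμ s), abs_of_nonneg ((hpol s).1 a)]
    · refine (Finset.abs_sum_le_sum_abs _ _).trans (Finset.sum_le_sum fun s _ => ?_)
      refine (Finset.abs_sum_le_sum_abs _ _).trans (Finset.sum_le_sum fun a _ => ?_)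
      rw [abs_mul, abs_mul, abs_of_nonneg ((hpol s).1 a), abs_of_nonneg ((hP s a _).1 s')]
  calc ∑ s', |(∑ s, ∑ a, μ s * pol s a * P s a ρ s') - ∑ s, ∑ a, ν s * pol s a * P s a ρ' s'|
      ≤ ∑ s', ((∑ s, ∑ a, μ s * pol s a * |P s a ρ s' - P s a ρ' s'|) +
        ∑ s, ∑ a, |μ s - ν s| * pol s a * P s a ρ' s') := Finset.sum_le_sum fun s' _ => key s'
    _ = (∑ s', ∑ s, ∑ a, μ s * pol s a * |P s a ρ s' - P s a ρ' s'|) +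
        ∑ s', ∑ s, ∑ a, |μ s - ν s| * pol s a * P s a ρ' s' := Finset.sum_add_distrib
    _ ≤ LP * ∑ x, |ρ x - ρ' x| + ∑ s, |μ s - ν s| := by
        have hb1 : (∑ s' : S, ∑ s : S, ∑ a : A, μ s * pol s a * |P s a ρ s' - P s a ρ' s'|)
            ≤ LP * ∑ x, |ρ x - ρ' x| := by
          rw [Finset.sum_comm]
          have : ∀ s : S, ∑ s' : S, ∑ a : A, μ s * pol s a * |P s a ρ s' - P s a ρ' s'| ≤
              μ s * (LP * ∑ x, |ρ x - ρ' x|) := by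
            intro s
            rw [Finset.sum_comm]
            calc ∑ a, ∑ s', μ s * pol s a * |P s a ρ s' - P s a ρ' s'|
                = ∑ a, μ s * pol s a * ∑ s', |P s a ρ s' - P s a ρ' s'| := by
                  simp [Finset.mul_sum]
              _ ≤ ∑ a, μ s * pol s a * (LP * ∑ x, |ρ x - ρ' x|) := by
                  refine Finset.sum_le_sum fun a _ => ?_
                  exact mul_le_mul_of_nonneg_left (hPLip s a ρ ρ')
                    (mul_nonneg (hμ s) ((hpol s).1 a))
              _ = μ s * (LP * ∑ x, |ρ x - ρ' x|) := by
                  rw [← Finset.sum_mul, ← Finset.mul_sum, (hpol s).2, mul_one]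
          calc ∑ s, ∑ s' : S, ∑ a : A, μ s * pol s a * |P s a ρ s' - P s a ρ' s'|
              ≤ ∑ s, μ s * (LP * ∑ x, |ρ x - ρ' x|) := Finset.sum_le_sum fun s _ => this s
            _ = LP * ∑ x, |ρ x - ρ' x| := by rw [← Finset.sum_mul, hμ1, one_mul]
        have hb2 : (∑ s' : S, ∑ s : S, ∑ a : A, |μ s - ν s| * pol s a * P s a ρ' s')
            ≤ ∑ s, |μ s - ν s| := by
          have h2 : ∀ s : S, ∑ s' : S, ∑ a : A, |μ s - ν s| * pol s a * P s a ρ' s'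
              = |μ s - ν s| := by
            intro s
            rw [Finset.sum_comm]
            have : ∀ a : A, ∑ s' : S, |μ s - ν s| * pol s a * P s a ρ' s'
                = |μ s - ν s| * pol s a := by
              intro a; rw [← Finset.mul_sum, (hP s a _).2, mul_one]
            rw [Finset.sum_congr rfl (fun a _ => this a), ← Finset.mul_sum, (hpol s).2, mul_one]
          rw [Finset.sum_comm]
          exact le_of_eq (Finset.sum_congr rfl fun s _ => h2 s)
        exact add_le_add hb1 hb2

/-- Same-policy, different-population error propagation: the one-step recursion
for the single-agent flows, and the summed bound `ε(1+L_P)^H / L_P²` when the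
population flows are `ε(1+L_P)ⁿ/L_P`-close. -/
theorem same_policy_diff_population_propagation {S A : Type*} [Fintype S] [Fintype A]
    (P : S → A → (S → ℝ) → S → ℝ) (πE πA π : ℕ → S → A → ℝ) (ρ0 : S → ℝ)
    (H : ℕ) (LP ε : ℝ) (hLP : 0 < LP) (hε : 0 ≤ ε)
    (hP : ∀ s a (ρ : S → ℝ), (∀ s', 0 ≤ P s a ρ s') ∧ ∑ s', P s a ρ s' = 1)
    (hPLip : ∀ s a (ρ ρ' : S → ℝ),
      ∑ s', |P s a ρ s' - P s a ρ' s'| ≤ LP * ∑ x, |ρ x - ρ' x|)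
    (hπE : ∀ n s, (∀ a, 0 ≤ πE n s a) ∧ ∑ a, πE n s a = 1)
    (hπA : ∀ n s, (∀ a, 0 ≤ πA n s a) ∧ ∑ a, πA n s a = 1)
    (hπ : ∀ n s, (∀ a, 0 ≤ π n s a) ∧ ∑ a, π n s a = 1)
    (hρ0 : (∀ s, 0 ≤ ρ0 s) ∧ ∑ s, ρ0 s = 1) :
    (∀ n, ∑ s, |agentFlow P (popFlow P πA ρ0) π ρ0 (n + 1) s -
          agentFlow P (popFlow P πE ρ0) π ρ0 (n + 1) s| ≤
        LP * (∑ s, |popFlow P πA ρ0 n s - popFlow P πE ρ0 n s|) +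
        ∑ s, |agentFlow P (popFlow P πA ρ0) π ρ0 n s -
          agentFlow P (popFlow P πE ρ0) π ρ0 n s|) ∧
    ((∀ n, ∑ s, |popFlow P πA ρ0 n s - popFlow P πE ρ0 n s| ≤
        ε * (1 + LP) ^ n / LP) →
      ∑ n ∈ range H, ∑ s, |agentFlow P (popFlow P πA ρ0) π ρ0 n s -
          agentFlow P (popFlow P πE ρ0) π ρ0 n s| ≤
        ε * (1 + LP) ^ H / LP ^ 2) := by
  have hmassA := agentFlow_mass P (popFlow P πA ρ0) π ρ0 hP hπ hρ0
  have hrec : ∀ n, ∑ s, |agentFlow P (popFlow P πA ρ0) π ρ0 (n + 1) s -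
          agentFlow P (popFlow P πE ρ0) π ρ0 (n + 1) s| ≤
        LP * (∑ s, |popFlow P πA ρ0 n s - popFlow P πE ρ0 n s|) +
        ∑ s, |agentFlow P (popFlow P πA ρ0) π ρ0 n s -
          agentFlow P (popFlow P πE ρ0) π ρ0 n s| := by
    intro n
    have h := step_bound P (π n) (agentFlow P (popFlow P πA ρ0) π ρ0 n)
      (agentFlow P (popFlow P πE ρ0) π ρ0 n)
      (popFlow P πA ρ0 n) (popFlow P πE ρ0 n) LP hP hPLip (hπ n)
      (hmassA n).1 (hmassA n).2
    simpa [agentFlow] using h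
  refine ⟨hrec, fun hpop => ?_⟩
  have hdn : ∀ n, ∑ s, |agentFlow P (popFlow P πA ρ0) π ρ0 n s -
      agentFlow P (popFlow P πE ρ0) π ρ0 n s| ≤ ε * ((1 + LP) ^ n - 1) / LP := by
    intro n
    induction n with
    | zero => simp [agentFlow]
    | succ n ih =>
      have h1 := hrec n
      have h2 := hpop n
      have h3 := h1.trans (add_le_add (mul_le_mul_of_nonneg_left h2 hLP.le) ih)
      have heq : LP * (ε * (1 + LP) ^ n / LP) + ε * ((1 + LP) ^ n - 1) / LP
          = ε * ((1 + LP) ^ (n + 1) - 1) / LP := by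
        field_simp
        ring
      linarith
  have hx1 : (1 : ℝ) + LP ≠ 1 := by linarith
  have hg : ∑ n ∈ range H, (1 + LP) ^ n = ((1 + LP) ^ H - 1) / LP := by
    rw [geom_sum_eq hx1]
    congr 1
    ring
  have hpowpos : (0:ℝ) < (1 + LP) ^ H := pow_pos (by linarith) H
  calc ∑ n ∈ range H, ∑ s, |agentFlow P (popFlow P πA ρ0) π ρ0 n s -
          agentFlow P (popFlow P πE ρ0) π ρ0 n s|
      ≤ ∑ n ∈ range H, ε * ((1 + LP) ^ n - 1) / LP :=
        Finset.sum_le_sum fun n _ => hdn n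
    _ ≤ ∑ n ∈ range H, ε * (1 + LP) ^ n / LP := by
        refine Finset.sum_le_sum fun n _ => ?_
        have hp : (0:ℝ) ≤ (1 + LP) ^ n := by positivity
        gcongr
        linarith
    _ = ε / LP * ∑ n ∈ range H, (1 + LP) ^ n := by
        rw [Finset.mul_sum]
        exact Finset.sum_congr rfl fun n _ => by ring
    _ = ε / LP * (((1 + LP) ^ H - 1) / LP) := by rw [hg]
    _ ≤ ε / LP * ((1 + LP) ^ H / LP) :=
        mul_le_mul_of_nonneg_left ((div_le_div_iff_of_pos_right hLP).mpr (by linarith))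
          (by positivity)
    _ = ε * (1 + LP) ^ H / LP ^ 2 := by
        rw [div_mul_div_comm, sq]
end

section
/- MFC adversarial bound: in a finite-horizon MFG with L_P > 0, under Lipschitz and boundedness assumptions on r, πᴱ a Nash equilibrium, and ‖μₙ^{(πᴬ)πᴬ} − μₙ^{(πᴱ)πᴱ}‖₁ ≤ ε for all n, the exploitability satisfies 𝓔(πᴬ) ≤ ((2L_r + r_max)H + 3 L_P r_max H²)·ε, a bound quadratic (not exponential) in the horizon H. -/
open Finset

/-!
Split the exploitability against a deviation `π'` as
`[V(π', ρᴬ) - V(π', ρᴱ)] + [V(π', ρᴱ) - V(πᴱ, ρᴱ)] + [V(πᴱ, ρᴱ) - V(πᴬ, ρᴬ)]`.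
The middle term is nonpositive because `πᴱ` is a Nash equilibrium. The population flows
`ρᴬ, ρᴱ` are marginals of `ε`-close occupancies, hence `ε`-close in `ℓ¹` at every time. Driving
the same deviator by them, its state flows drift apart by at most `L_P ε` per step, so at time
`n < H` its occupancies are `H L_P ε`-close and the first term is at most
`H (r_max H L_P + L_r) ε`; the last term is at most `H (r_max + L_r) ε`. Only linear growth of
the drift is involved, which is why the bound is quadratic rather than exponential in `H`.
-/

section Simplex

variable {ι κ : Type*} [Fintype ι] [Fintype κ]

theorem nonempty_of_mem_stdSimplex {u : ι → ℝ} (hu : u ∈ stdSimplex ℝ ι) : Nonempty ι := by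
  by_contra h
  rw [not_nonempty_iff] at h
  simp [stdSimplex_of_isEmpty_index] at hu

theorem nonneg_of_forall_nonneg_mul_sum_abs_sub [Nonempty ι] {L : ℝ}
    (h : ∀ ρ ρ' : ι → ℝ, 0 ≤ L * ∑ x, |ρ x - ρ' x|) : 0 ≤ L := by
  classical
  inhabit ι
  simpa [apply_ite] using h (fun x => if x = default then 1 else 0) 0

theorem sum_mul_kernel_mem_stdSimplex {u : ι → ℝ} {K : ι → κ → ℝ}
    (hu : u ∈ stdSimplex ℝ ι) (hK : ∀ i, K i ∈ stdSimplex ℝ κ) :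
    (fun j => ∑ i, u i * K i j) ∈ stdSimplex ℝ κ := by
  refine ⟨fun j => sum_nonneg fun i _ => mul_nonneg (hu.1 i) ((hK i).1 j), ?_⟩
  rw [sum_comm]
  simp_rw [← mul_sum, (hK _).2, mul_one]
  exact hu.2

theorem sum_abs_sum_mul_kernel_sub_le {u v : ι → ℝ} {K K' : ι → κ → ℝ}
    (hK : ∀ i, K i ∈ stdSimplex ℝ κ) (hv : ∀ i, 0 ≤ v i) :
    ∑ j, |∑ i, u i * K i j - ∑ i, v i * K' i j| ≤
      ∑ i, |u i - v i| + ∑ i, v i * ∑ j, |K i j - K' i j| := by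
  calc ∑ j, |∑ i, u i * K i j - ∑ i, v i * K' i j|
      = ∑ j, |∑ i, ((u i - v i) * K i j + v i * (K i j - K' i j))| := by
        simp_rw [← sum_sub_distrib]
        ring_nf
    _ ≤ ∑ j, ∑ i, (|u i - v i| * K i j + v i * |K i j - K' i j|) := by
        gcongr with j
        refine (abs_sum_le_sum_abs _ _).trans (sum_le_sum fun i _ => (abs_add_le _ _).trans ?_)
        rw [abs_mul, abs_mul, abs_of_nonneg ((hK i).1 j), abs_of_nonneg (hv i)]
    _ = ∑ i, |u i - v i| + ∑ i, v i * ∑ j, |K i j - K' i j| := by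
        rw [sum_comm]
        simp_rw [sum_add_distrib, ← mul_sum, (hK _).2, mul_one]

theorem abs_sum_mul_sub_sum_mul_le {u v f g : ι → ℝ} {M c : ℝ} (hu : u ∈ stdSimplex ℝ ι)
    (hf : ∀ i, |f i| ≤ M) (hgf : ∀ i, |g i - f i| ≤ c) :
    |∑ i, u i * g i - ∑ i, v i * f i| ≤ M * ∑ i, |u i - v i| + c := by
  calc |∑ i, u i * g i - ∑ i, v i * f i|
      = |∑ i, ((u i - v i) * f i + u i * (g i - f i))| := by
        rw [← sum_sub_distrib]
        ring_nf
    _ ≤ ∑ i, (|u i - v i| * M + u i * c) := by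
        refine (abs_sum_le_sum_abs _ _).trans (sum_le_sum fun i _ => (abs_add_le _ _).trans ?_)
        rw [abs_mul, abs_mul, abs_of_nonneg (hu.1 i)]
        exact add_le_add (mul_le_mul_of_nonneg_left (hf i) (abs_nonneg _))
          (mul_le_mul_of_nonneg_left (hgf i) (hu.1 i))
    _ = M * ∑ i, |u i - v i| + c := by
        rw [sum_add_distrib, ← sum_mul, ← sum_mul, hu.2, one_mul, mul_comm]

end Simplex

section Occupancy

variable {S A : Type*} [Fintype S] [Fintype A]

def occupancy (μ : S → ℝ) (pol : S → A → ℝ) : S × A → ℝ := fun p => μ p.1 * pol p.1 p.2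

theorem occupancy_mem_stdSimplex {μ : S → ℝ} {pol : S → A → ℝ} (hμ : μ ∈ stdSimplex ℝ S)
    (hpol : ∀ s, pol s ∈ stdSimplex ℝ A) : occupancy μ pol ∈ stdSimplex ℝ (S × A) := by
  refine ⟨fun p => mul_nonneg (hμ.1 p.1) ((hpol p.1).1 p.2), ?_⟩
  simp_rw [occupancy, Fintype.sum_prod_type, ← mul_sum, (hpol _).2, mul_one]
  exact hμ.2

theorem sum_abs_occupancy_sub_occupancy (μ ν : S → ℝ) {pol : S → A → ℝ}
    (hpol : ∀ s, pol s ∈ stdSimplex ℝ A) :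
    ∑ p, |occupancy μ pol p - occupancy ν pol p| = ∑ s, |μ s - ν s| := by
  simp_rw [occupancy, Fintype.sum_prod_type, ← sub_mul, abs_mul, ← mul_sum,
    abs_of_nonneg ((hpol _).1 _), (hpol _).2, mul_one]

theorem sum_abs_sub_le_sum_abs_occupancy_sub {μ ν : S → ℝ} {pol pol' : S → A → ℝ}
    (hpol : ∀ s, ∑ a, pol s a = 1) (hpol' : ∀ s, ∑ a, pol' s a = 1) :
    ∑ s, |μ s - ν s| ≤ ∑ p, |occupancy μ pol p - occupancy ν pol' p| := by
  rw [Fintype.sum_prod_type]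
  refine sum_le_sum fun s _ => (abs_sum_le_sum_abs _ _).trans_eq' ?_
  simp_rw [occupancy, sum_sub_distrib, ← mul_sum, hpol, hpol', mul_one]

end Occupancy

section Flows

variable {S A : Type*} [Fintype S] [Fintype A] {P : S → A → (S → ℝ) → S → ℝ}
  {pol : ℕ → S → A → ℝ} {ρ0 : S → ℝ}

theorem agentFlow_succ (ρpop : ℕ → S → ℝ) (n : ℕ) :
    agentFlow P ρpop pol ρ0 (n + 1) = fun s' =>
      ∑ p, occupancy (agentFlow P ρpop pol ρ0 n) (pol n) p * P p.1 p.2 (ρpop n) s' := by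
  simp only [agentFlow, occupancy, Fintype.sum_prod_type]

theorem popFlow_eq_agentFlow : popFlow P pol ρ0 = agentFlow P (popFlow P pol ρ0) pol ρ0 := by
  funext n
  induction n with
  | zero => rfl
  | succ n ih => simp only [popFlow, agentFlow, ← ih]

theorem agentFlow_mem_stdSimplex (hP : ∀ s a ρ, P s a ρ ∈ stdSimplex ℝ S)
    (hpol : ∀ n s, pol n s ∈ stdSimplex ℝ A) (hρ0 : ρ0 ∈ stdSimplex ℝ S) (ρpop : ℕ → S → ℝ)
    (n : ℕ) : agentFlow P ρpop pol ρ0 n ∈ stdSimplex ℝ S := by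
  induction n with
  | zero => exact hρ0
  | succ n ih =>
    rw [agentFlow_succ]
    exact sum_mul_kernel_mem_stdSimplex (occupancy_mem_stdSimplex ih (hpol n)) fun _ => hP _ _ _

theorem sum_abs_agentFlow_sub_le (hP : ∀ s a ρ, P s a ρ ∈ stdSimplex ℝ S)
    (hpol : ∀ n s, pol n s ∈ stdSimplex ℝ A) (hρ0 : ρ0 ∈ stdSimplex ℝ S) {LP δ : ℝ} (hLP : 0 ≤ LP)
    (hPLip : ∀ s a (ρ ρ' : S → ℝ), ∑ s', |P s a ρ s' - P s a ρ' s'| ≤ LP * ∑ x, |ρ x - ρ' x|)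
    {ρ ρ' : ℕ → S → ℝ} (hρ : ∀ n, ∑ x, |ρ n x - ρ' n x| ≤ δ) (n : ℕ) :
    ∑ s, |agentFlow P ρ pol ρ0 n s - agentFlow P ρ' pol ρ0 n s| ≤ n * (LP * δ) := by
  induction n with
  | zero => simp [agentFlow]
  | succ n ih =>
    set ν := occupancy (agentFlow P ρ' pol ρ0 n) (pol n)
    have hν : ν ∈ stdSimplex ℝ (S × A) :=
      occupancy_mem_stdSimplex (agentFlow_mem_stdSimplex hP hpol hρ0 ρ' n) (hpol n)
    have hkernel : ∑ p, ν p * ∑ s', |P p.1 p.2 (ρ n) s' - P p.1 p.2 (ρ' n) s'| ≤ LP * δ :=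
      calc _ ≤ ∑ p, ν p * (LP * δ) := by
            gcongr with p _
            · exact hν.1 p
            · exact (hPLip _ _ _ _).trans (mul_le_mul_of_nonneg_left (hρ n) hLP)
        _ = LP * δ := by rw [← sum_mul, hν.2, one_mul]
    rw [agentFlow_succ, agentFlow_succ]
    refine (sum_abs_sum_mul_kernel_sub_le (fun _ => hP _ _ _) hν.1).trans ?_
    rw [sum_abs_occupancy_sub_occupancy _ _ (hpol n)]
    push_cast
    linarith

theorem val_eq_sum_occupancy (r : S → A → (S → ℝ) → ℝ) (H : ℕ) (ρpop : ℕ → S → ℝ) :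
    val P r ρ0 H pol ρpop = ∑ n ∈ range H,
      ∑ p, occupancy (agentFlow P ρpop pol ρ0 n) (pol n) p * r p.1 p.2 (ρpop n) := by
  simp only [_root_.val, occupancy, Fintype.sum_prod_type]

theorem abs_val_sub_val_le (hP : ∀ s a ρ, P s a ρ ∈ stdSimplex ℝ S)
    (hpol : ∀ n s, pol n s ∈ stdSimplex ℝ A) (hρ0 : ρ0 ∈ stdSimplex ℝ S)
    {r : S → A → (S → ℝ) → ℝ} {H : ℕ} {pol' : ℕ → S → A → ℝ} {ρ ρ' : ℕ → S → ℝ} {M Lr : ℝ}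
    (hr : ∀ n < H, ∀ s a, |r s a (ρ' n)| ≤ M)
    (hrLip : ∀ s a (ρ ρ' : S → ℝ), |r s a ρ - r s a ρ'| ≤ Lr * ∑ x, |ρ x - ρ' x|) :
    |val P r ρ0 H pol ρ - val P r ρ0 H pol' ρ'| ≤ ∑ n ∈ range H,
      (M * ∑ p, |occupancy (agentFlow P ρ pol ρ0 n) (pol n) p -
          occupancy (agentFlow P ρ' pol' ρ0 n) (pol' n) p|
        + Lr * ∑ x, |ρ n x - ρ' n x|) := by
  rw [val_eq_sum_occupancy, val_eq_sum_occupancy, ← sum_sub_distrib]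
  refine (abs_sum_le_sum_abs _ _).trans (sum_le_sum fun n hn => ?_)
  exact abs_sum_mul_sub_sum_mul_le
    (occupancy_mem_stdSimplex (agentFlow_mem_stdSimplex hP hpol hρ0 ρ n) (hpol n))
    (fun p => hr n (mem_range.mp hn) p.1 p.2) fun p => hrLip _ _ _ _

theorem val_sub_val_le_of_sum_abs_sub_le (hP : ∀ s a ρ, P s a ρ ∈ stdSimplex ℝ S)
    (hpol : ∀ n s, pol n s ∈ stdSimplex ℝ A) (hρ0 : ρ0 ∈ stdSimplex ℝ S)
    {r : S → A → (S → ℝ) → ℝ} {H : ℕ} {ρ ρ' : ℕ → S → ℝ} {LP Lr M δ : ℝ}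
    (hLP : 0 ≤ LP) (hLr : 0 ≤ Lr) (hM : 0 ≤ M)
    (hPLip : ∀ s a (ρ ρ' : S → ℝ), ∑ s', |P s a ρ s' - P s a ρ' s'| ≤ LP * ∑ x, |ρ x - ρ' x|)
    (hrLip : ∀ s a (ρ ρ' : S → ℝ), |r s a ρ - r s a ρ'| ≤ Lr * ∑ x, |ρ x - ρ' x|)
    (hr : ∀ n < H, ∀ s a, |r s a (ρ' n)| ≤ M) (hρ : ∀ n, ∑ x, |ρ n x - ρ' n x| ≤ δ) :
    val P r ρ0 H pol ρ - val P r ρ0 H pol ρ' ≤ H * (M * (H * (LP * δ)) + Lr * δ) := by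
  refine (le_abs_self _).trans ((abs_val_sub_val_le hP hpol hρ0 hr hrLip).trans ?_)
  refine (sum_le_card_nsmul _ _ (M * (H * (LP * δ)) + Lr * δ) fun n hn => ?_).trans_eq
    (by rw [card_range, nsmul_eq_mul])
  have hn : (n : ℝ) ≤ H := by exact_mod_cast (mem_range.mp hn).le
  have hδ : 0 ≤ δ := (sum_nonneg fun _ _ => abs_nonneg _).trans (hρ 0)
  rw [sum_abs_occupancy_sub_occupancy _ _ (hpol n)]
  gcongr
  · exact (sum_abs_agentFlow_sub_le hP hpol hρ0 hLP hPLip hρ n).trans (by gcongr)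
  · exact hρ n

theorem abs_val_popFlow_sub_val_popFlow_le (hP : ∀ s a ρ, P s a ρ ∈ stdSimplex ℝ S)
    (hpol : ∀ n s, pol n s ∈ stdSimplex ℝ A) (hρ0 : ρ0 ∈ stdSimplex ℝ S)
    {r : S → A → (S → ℝ) → ℝ} {H : ℕ} {pol' : ℕ → S → A → ℝ} {Lr M δ : ℝ} (hLr : 0 ≤ Lr)
    (hM : 0 ≤ M) (hpol' : ∀ n s, ∑ a, pol' n s a = 1)
    (hrLip : ∀ s a (ρ ρ' : S → ℝ), |r s a ρ - r s a ρ'| ≤ Lr * ∑ x, |ρ x - ρ' x|)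
    (hr : ∀ n < H, ∀ s a, |r s a (popFlow P pol' ρ0 n)| ≤ M)
    (hocc : ∀ n, ∑ p, |occupancy (popFlow P pol ρ0 n) (pol n) p -
      occupancy (popFlow P pol' ρ0 n) (pol' n) p| ≤ δ) :
    |val P r ρ0 H pol (popFlow P pol ρ0) - val P r ρ0 H pol' (popFlow P pol' ρ0)| ≤
      H * (M * δ + Lr * δ) := by
  refine (abs_val_sub_val_le hP hpol hρ0 hr hrLip).trans ?_
  refine (sum_le_card_nsmul _ _ (M * δ + Lr * δ) fun n _ => ?_).trans_eq
    (by rw [card_range, nsmul_eq_mul])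
  rw [← popFlow_eq_agentFlow, ← popFlow_eq_agentFlow]
  gcongr
  · exact hocc n
  · exact (sum_abs_sub_le_sum_abs_occupancy_sub (fun s => (hpol n s).2) (hpol' n)).trans (hocc n)

end Flows

theorem mfc_adv_nash_imitation_gap_general {S A : Type*} [Fintype S] [Fintype A]
    (P : S → A → (S → ℝ) → S → ℝ) (r : S → A → (S → ℝ) → ℝ) (ρ0 : S → ℝ)
    (H : ℕ) (πE πA : ℕ → S → A → ℝ) (LP Lr rmax ε : ℝ)
    (hP : ∀ s a (ρ : S → ℝ), (∀ s', 0 ≤ P s a ρ s') ∧ ∑ s', P s a ρ s' = 1)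
    (hPLip : ∀ s a (ρ ρ' : S → ℝ),
      ∑ s', |P s a ρ s' - P s a ρ' s'| ≤ LP * ∑ x, |ρ x - ρ' x|)
    (hrLip : ∀ s a (ρ ρ' : S → ℝ), |r s a ρ - r s a ρ'| ≤ Lr * ∑ x, |ρ x - ρ' x|)
    (hrmax : ∀ n < H, ∀ s a, |r s a (popFlow P πE ρ0 n)| ≤ rmax)
    (hπE : ∀ n s, (∀ a, 0 ≤ πE n s a) ∧ ∑ a, πE n s a = 1)
    (hπA : ∀ n s, (∀ a, 0 ≤ πA n s a) ∧ ∑ a, πA n s a = 1)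
    (hρ0 : (∀ s, 0 ≤ ρ0 s) ∧ ∑ s, ρ0 s = 1)
    (hNash : ∀ π' : ℕ → S → A → ℝ, (∀ n s, (∀ a, 0 ≤ π' n s a) ∧ ∑ a, π' n s a = 1) →
      val P r ρ0 H π' (popFlow P πE ρ0) ≤ val P r ρ0 H πE (popFlow P πE ρ0))
    (hErr : ∀ n, ∑ s, ∑ a, |πA n s a * popFlow P πA ρ0 n s - πE n s a * popFlow P πE ρ0 n s| ≤ ε) :
    ∀ π' : ℕ → S → A → ℝ, (∀ n s, (∀ a, 0 ≤ π' n s a) ∧ ∑ a, π' n s a = 1) →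
      val P r ρ0 H π' (popFlow P πA ρ0) - val P r ρ0 H πA (popFlow P πA ρ0) ≤
        ((2 * Lr + rmax) * H + 3 * LP * rmax * H ^ 2) * ε := by
  intro π' hπ'
  rcases Nat.eq_zero_or_pos H with rfl | hH
  · simp [_root_.val]
  set ρA := popFlow P πA ρ0
  set ρE := popFlow P πE ρ0
  obtain ⟨s₀⟩ : Nonempty S := nonempty_of_mem_stdSimplex hρ0
  have : Nonempty S := ⟨s₀⟩
  obtain ⟨a₀⟩ := nonempty_of_mem_stdSimplex (hπE 0 s₀)
  have hrmax₀ : 0 ≤ rmax := (abs_nonneg _).trans (hrmax 0 hH s₀ a₀)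
  have hLP : 0 ≤ LP := nonneg_of_forall_nonneg_mul_sum_abs_sub fun ρ ρ' =>
    (sum_nonneg fun _ _ => abs_nonneg _).trans (hPLip s₀ a₀ ρ ρ')
  have hLr : 0 ≤ Lr := nonneg_of_forall_nonneg_mul_sum_abs_sub fun ρ ρ' =>
    (abs_nonneg _).trans (hrLip s₀ a₀ ρ ρ')
  have hocc : ∀ n, ∑ p, |occupancy (ρA n) (πA n) p - occupancy (ρE n) (πE n) p| ≤ ε := by
    simpa only [occupancy, Fintype.sum_prod_type, mul_comm] using hErr
  have hρ : ∀ n, ∑ x, |ρA n x - ρE n x| ≤ ε := fun n =>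
    (sum_abs_sub_le_sum_abs_occupancy_sub (fun s => (hπA n s).2) fun s => (hπE n s).2).trans
      (hocc n)
  have hε : 0 ≤ ε := (sum_nonneg fun _ _ => abs_nonneg _).trans (hρ 0)
  have hDeviation : val P r ρ0 H π' ρA - val P r ρ0 H π' ρE ≤
      H * (rmax * (H * (LP * ε)) + Lr * ε) :=
    val_sub_val_le_of_sum_abs_sub_le hP hπ' hρ0 hLP hLr hrmax₀ hPLip hrLip hrmax hρ
  have hImitation : val P r ρ0 H πE ρE - val P r ρ0 H πA ρA ≤ H * (rmax * ε + Lr * ε) :=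
    (le_abs_self _).trans <| (abs_sub_comm _ _).trans_le <|
      abs_val_popFlow_sub_val_popFlow_le hP hπA hρ0 hLr hrmax₀ (fun n s => (hπE n s).2) hrLip
        hrmax hocc
  nlinarith [hNash π' hπ', mul_nonneg (mul_nonneg hLP hrmax₀) hε]

/-- MFC adversarial bound: if `‖μₙ^{(πᴬ)πᴬ} − μₙ^{(πᴱ)πᴱ}‖₁ ≤ ε` for all `n`, then `𝓔(πᴬ) ≤ ((2L_r + r_max)H + 3 L_P r_max H²) ε`, quadratic in the horizon. -/
theorem mfc_adv_nash_imitation_gap {S A : Type*} [Fintype S] [Fintype A]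
    (P : S → A → (S → ℝ) → S → ℝ) (r : S → A → (S → ℝ) → ℝ) (ρ0 : S → ℝ)
    (H : ℕ) (πE πA : ℕ → S → A → ℝ) (LP Lr rmax ε : ℝ) (hLP : 0 < LP)
    (hP : ∀ s a (ρ : S → ℝ), (∀ s', 0 ≤ P s a ρ s') ∧ ∑ s', P s a ρ s' = 1)
    (hPLip : ∀ s a (ρ ρ' : S → ℝ),
      ∑ s', |P s a ρ s' - P s a ρ' s'| ≤ LP * ∑ x, |ρ x - ρ' x|)
    (hrLip : ∀ s a (ρ ρ' : S → ℝ), |r s a ρ - r s a ρ'| ≤ Lr * ∑ x, |ρ x - ρ' x|)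
    (hrmax : ∀ n < H, ∀ s a, |r s a (popFlow P πE ρ0 n)| ≤ rmax)
    (hπE : ∀ n s, (∀ a, 0 ≤ πE n s a) ∧ ∑ a, πE n s a = 1)
    (hπA : ∀ n s, (∀ a, 0 ≤ πA n s a) ∧ ∑ a, πA n s a = 1)
    (hρ0 : (∀ s, 0 ≤ ρ0 s) ∧ ∑ s, ρ0 s = 1)
    (hNash : ∀ π' : ℕ → S → A → ℝ, (∀ n s, (∀ a, 0 ≤ π' n s a) ∧ ∑ a, π' n s a = 1) →
      val P r ρ0 H π' (popFlow P πE ρ0) ≤ val P r ρ0 H πE (popFlow P πE ρ0))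
    (hErr : ∀ n, ∑ s, ∑ a, |πA n s a * popFlow P πA ρ0 n s - πE n s a * popFlow P πE ρ0 n s| ≤ ε) :
    ∀ π' : ℕ → S → A → ℝ, (∀ n s, (∀ a, 0 ≤ π' n s a) ∧ ∑ a, π' n s a = 1) →
      val P r ρ0 H π' (popFlow P πA ρ0) - val P r ρ0 H πA (popFlow P πA ρ0) ≤
        ((2 * Lr + rmax) * H + 3 * LP * rmax * H ^ 2) * ε :=
  mfc_adv_nash_imitation_gap_general P r ρ0 H πE πA LP Lr rmax ε hP hPLip hrLip hrmax hπE hπA hρ0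
    hNash hErr
end

section
/- In the attractor MFG, any policy with α > 0 has Nash imitation gap at most H−1, and the policy π^{α=0} has exploitability zero (is a Nash equilibrium): following π⁰, the population mass stays at ρₙ(s₀)=1 for all n, the value is 0, and no alternative policy achieves value greater than 0 against this population. -/
open Finset

/- The attractor MFG: states `Bool` (`false = s₀`, `true = s₁`), actions
`Bool` (`false = a₀`, `true = a₁`). -/

/-- Transition kernel of the attractor MFG with Lipschitz parameter `L`:
`s₁` is absorbing; from `s₀`, `a₁` goes to `s₁` surely and `a₀` goes to `s₁`
with probability `min{1, L·ρ(s₁)}`. -/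
noncomputable def attP (L : ℝ) : Bool → Bool → (Bool → ℝ) → Bool → ℝ :=
  fun s a ρ s' =>
    let p : ℝ := if s then 1 else if a then 1 else min 1 (L * ρ true)
    if s' then p else 1 - p

/-- Reward of the attractor MFG: `0` in `s₀` and `−1` in `s₁`. -/
def attR : Bool → Bool → (Bool → ℝ) → ℝ := fun s _ _ => if s then -1 else 0

/-- Initial distribution concentrated on `s₀`. -/
def attρ0 : Bool → ℝ := fun s => if s then 0 else 1

/-- The policy `π⁰` always playing `a₀`. -/
def piZero : ℕ → Bool → Bool → ℝ := fun _ _ a => if a then 0 else 1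

lemma attP_nonneg {L : ℝ} (hL : 0 ≤ L) (s a : Bool) (ρ : Bool → ℝ) (hρ : 0 ≤ ρ true)
    (s' : Bool) : 0 ≤ attP L s a ρ s' := by
  have h1 : (0:ℝ) ≤ min 1 (L * ρ true) := le_min zero_le_one (mul_nonneg hL hρ)
  have h2 : min 1 (L * ρ true) ≤ 1 := min_le_left _ _
  cases s <;> cases a <;> cases s' <;> simp [attP] <;> linarith [mul_nonneg hL hρ]

lemma popFlow_nonneg {L : ℝ} (hL : 0 ≤ L) (π : ℕ → Bool → Bool → ℝ)
    (hπ : ∀ n s a, 0 ≤ π n s a) : ∀ n s, 0 ≤ popFlow (attP L) π attρ0 n s := by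
  intro n
  induction n with
  | zero => intro s; cases s <;> simp [popFlow, attρ0]
  | succ n ih =>
    intro s'
    simp only [popFlow]
    apply Finset.sum_nonneg; intro s _
    apply Finset.sum_nonneg; intro a _
    exact mul_nonneg (mul_nonneg (ih s) (hπ n s a)) (attP_nonneg hL s a _ (ih true) s')

lemma agentFlow_nonneg {L : ℝ} (hL : 0 ≤ L) (ρpop : ℕ → Bool → ℝ)
    (hρ : ∀ n, 0 ≤ ρpop n true) (π : ℕ → Bool → Bool → ℝ)
    (hπ : ∀ n s a, 0 ≤ π n s a) : ∀ n s, 0 ≤ agentFlow (attP L) ρpop π attρ0 n s := by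
  intro n
  induction n with
  | zero => intro s; cases s <;> simp [agentFlow, attρ0]
  | succ n ih =>
    intro s'
    simp only [agentFlow]
    apply Finset.sum_nonneg; intro s _
    apply Finset.sum_nonneg; intro a _
    exact mul_nonneg (mul_nonneg (ih s) (hπ n s a)) (attP_nonneg hL s a _ (hρ n) s')

lemma agentFlow_mass_s17 {L : ℝ} (ρpop : ℕ → Bool → ℝ) (π : ℕ → Bool → Bool → ℝ)
    (hπ : ∀ n s, π n s true + π n s false = 1) :
    ∀ n, agentFlow (attP L) ρpop π attρ0 n true + agentFlow (attP L) ρpop π attρ0 n false = 1 := by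
  intro n
  induction n with
  | zero => simp [agentFlow, attρ0]
  | succ n ih =>
    have h1 := hπ n true
    have h2 := hπ n false
    simp only [agentFlow, Fintype.sum_bool, attP]
    norm_num
    linear_combination (agentFlow (attP L) ρpop π attρ0 n true) * h1 +
      (agentFlow (attP L) ρpop π attρ0 n false) * h2 + ih

lemma popFlow_piZero {L : ℝ} :
    ∀ n, popFlow (attP L) piZero attρ0 n true = 0 ∧ popFlow (attP L) piZero attρ0 n false = 1 := by
  intro n
  induction n with
  | zero => simp [popFlow, attρ0]
  | succ n ih =>
    obtain ⟨ih1, ih2⟩ := ih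
    constructor <;> · simp [popFlow, Fintype.sum_bool, attP, piZero, ih1, ih2]

lemma agentFlow_piZero {L : ℝ} :
    ∀ n, agentFlow (attP L) (popFlow (attP L) piZero attρ0) piZero attρ0 n true = 0 := by
  intro n
  induction n with
  | zero => simp [agentFlow, attρ0]
  | succ n ih =>
    simp [agentFlow, Fintype.sum_bool, attP, piZero, ih, (popFlow_piZero (L := L) n).1]

lemma val_nonpos {L : ℝ} (hL : 0 ≤ L) (H : ℕ) (ρpop : ℕ → Bool → ℝ)
    (hρ : ∀ n, 0 ≤ ρpop n true) (π' : ℕ → Bool → Bool → ℝ)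
    (hπ' : ∀ n s a, 0 ≤ π' n s a) :
    val (attP L) attR attρ0 H π' ρpop ≤ 0 := by
  apply Finset.sum_nonpos
  intro n _
  apply Finset.sum_nonpos
  intro s _
  apply Finset.sum_nonpos
  intro a _
  have h0 := agentFlow_nonneg hL ρpop hρ π' hπ' n s
  have hr : attR s a (ρpop n) ≤ 0 := by cases s <;> simp [attR]
  exact mul_nonpos_of_nonneg_of_nonpos (mul_nonneg h0 (hπ' n s a)) hr

lemma val_lb {L : ℝ} (hL : 0 ≤ L) (H : ℕ) (hH : 1 ≤ H) (ρpop : ℕ → Bool → ℝ)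
    (hρ : ∀ n, 0 ≤ ρpop n true) (π : ℕ → Bool → Bool → ℝ)
    (hπ : ∀ n s a, 0 ≤ π n s a) (hπs : ∀ n s, π n s true + π n s false = 1) :
    -((H : ℝ) - 1) ≤ val (attP L) attR attρ0 H π ρpop := by
  obtain ⟨m, rfl⟩ : ∃ m, H = m + 1 := ⟨H - 1, by omega⟩
  unfold _root_.val
  rw [Finset.sum_range_succ']
  have h0 : ∑ s, ∑ a, agentFlow (attP L) ρpop π attρ0 0 s * π 0 s a * attR s a (ρpop 0) = 0 := by
    simp [agentFlow, attρ0, attR, Fintype.sum_bool]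
  rw [h0, add_zero]
  have key : ∀ n, -1 ≤ ∑ s, ∑ a,
      agentFlow (attP L) ρpop π attρ0 n s * π n s a * attR s a (ρpop n) := by
    intro n
    have mass := agentFlow_mass_s17 (L := L) ρpop π hπs n
    have hT := agentFlow_nonneg hL ρpop hρ π hπ n true
    have hF := agentFlow_nonneg hL ρpop hρ π hπ n false
    have h1 := hπs n true
    have hp1 := hπ n true true
    have hp2 := hπ n true false
    simp only [Fintype.sum_bool, attR]
    norm_num
    nlinarith [mul_nonneg hF (hπ n false true), mul_nonneg hF (hπ n false false),
      mul_nonneg hT hp1, mul_nonneg hT hp2]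
  calc -((↑(m + 1) : ℝ) - 1) = ∑ _i ∈ range m, (-1 : ℝ) := by push_cast; simp
    _ ≤ _ := Finset.sum_le_sum fun i _ => key (i + 1)

/-- In the attractor MFG: `π⁰` keeps the whole population at `s₀`, its value is
`0`, it is a Nash equilibrium (no policy achieves value `> 0` against its
population, i.e. its exploitability is zero), and every policy has Nash
imitation gap (exploitability) at most `H − 1`. -/
theorem attractor_mfg_properties (L : ℝ) (hL : 0 ≤ L) (H : ℕ) (hH : 1 ≤ H) :
    (∀ n, popFlow (attP L) piZero attρ0 n false = 1) ∧
    val (attP L) attR attρ0 H piZero (popFlow (attP L) piZero attρ0) = 0 ∧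
    (∀ π' : ℕ → Bool → Bool → ℝ,
      (∀ n s, (∀ a, 0 ≤ π' n s a) ∧ ∑ a, π' n s a = 1) →
      val (attP L) attR attρ0 H π' (popFlow (attP L) piZero attρ0) ≤ 0) ∧
    (∀ π : ℕ → Bool → Bool → ℝ,
      (∀ n s, (∀ a, 0 ≤ π n s a) ∧ ∑ a, π n s a = 1) →
      ∀ π' : ℕ → Bool → Bool → ℝ,
        (∀ n s, (∀ a, 0 ≤ π' n s a) ∧ ∑ a, π' n s a = 1) →
        val (attP L) attR attρ0 H π' (popFlow (attP L) π attρ0) -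
          val (attP L) attR attρ0 H π (popFlow (attP L) π attρ0) ≤ (H : ℝ) - 1) := by
  refine ⟨fun n => (popFlow_piZero n).2, ?_, ?_, ?_⟩
  · unfold _root_.val
    apply Finset.sum_eq_zero
    intro n _
    simp [Fintype.sum_bool, piZero, attR, agentFlow_piZero (L := L) n]
  · intro π' hπ'
    exact val_nonpos hL H _ (fun n => le_of_eq (popFlow_piZero n).1.symm) π'
      (fun n s a => (hπ' n s).1 a)
  · intro π hπ π' hπ'
    have hρ : ∀ n, 0 ≤ popFlow (attP L) π attρ0 n true :=
      fun n => popFlow_nonneg hL π (fun n s a => (hπ n s).1 a) n true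
    have h1 := val_nonpos hL H _ hρ π' (fun n s a => (hπ' n s).1 a)
    have h2 := val_lb hL H hH _ hρ π (fun n s a => (hπ n s).1 a)
      (fun n s => by have := (hπ n s).2; rwa [Fintype.sum_bool] at this)
    linarith
end
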